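/- arXiv:1408.0849 — 3 statements merged into one kernel-verified Lean document; each statement's English description precedes it below -/
import Mathlib

section
/- If A and B are compact H-hulls with A ⊆ B, then hcap(B) = hcap(A) + hcap(g_A(B \ A)). -/
open Set Filter

/-- The upper half plane `ℍ`. -/
def UpperHalf : Set ℂ := {z | 0 < z.im}

/-- The filter of neighbourhoods of infinity in `ℂ`. -/
noncomputable def atInftyC : Filter ℂ := Filter.comap (fun z : ℂ => ‖z‖) Filter.atTop

/-- A compact `ℍ`-hull: a bounded subset `A ⊆ ℍ` with `A = cl(A) ∩ ℍ` and `ℍ \ A`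
simply connected. -/
def IsHHull (A : Set ℂ) : Prop :=
  Bornology.IsBounded A ∧ A ⊆ UpperHalf ∧ A = closure A ∩ UpperHalf ∧
    SimplyConnectedSpace ↥(UpperHalf \ A)

/-- `g` is the mapping-out conformal map of the hull `A`: a conformal bijection
`ℍ \ A → ℍ` with `g(z) − z → 0` as `z → ∞`. -/
def IsMapOut (A : Set ℂ) (g : ℂ → ℂ) : Prop :=
  DifferentiableOn ℂ g (UpperHalf \ A) ∧ Set.InjOn g (UpperHalf \ A) ∧
    g '' (UpperHalf \ A) = UpperHalf ∧
    Tendsto (fun z => g z - z) (atInftyC ⊓ Filter.principal (UpperHalf \ A)) (nhds 0)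

/-- `A` has half-plane capacity `c`: `c = lim_{z→∞} z (g_A(z) − z)` for the
mapping-out function `g_A` of `A`. -/
def HasHcap (A : Set ℂ) (c : ℝ) : Prop :=
  ∃ g : ℂ → ℂ, IsMapOut A g ∧
    Tendsto (fun z => z * (g z - z)) (atInftyC ⊓ Filter.principal (UpperHalf \ A)) (nhds (c : ℂ))

/-! If `h` maps out `g_A(B \ A)`, then `h ∘ g_A` maps out `B`, and the expansions
`g_A(z) = z + a/z + o(1/z)`, `h(w) = w + b/w + o(1/w)` compose to `z + (a + b)/z + o(1/z)`.
The substance is the uniqueness of mapping-out functions, which identifies `h ∘ g_A` with `g_B`.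
For two of them, `g₁` and `g₂`, the maximum principle applied to `Im (g₁ - g₂)` on
`{Im g₁ > ε}` (cut off at a large radius, where `g₁ - g₂` is small) gives `Im (g₁ - g₂) ≤ ε`;
that this region stays away from the hull uses that `g₁` maps bounded sets to bounded sets,
a connectedness argument. By symmetry `g₁ - g₂` is real, hence a constant, hence `0`.
-/

open Topology Metric Bornology

lemma isOpen_upperHalf : IsOpen UpperHalf :=
  isOpen_Ioi.preimage Complex.continuous_im

lemma eventually_atInftyC_inf_principal {S : Set ℂ} {p : ℂ → Prop} :
    (∀ᶠ z in atInftyC ⊓ 𝓟 S, p z) ↔ ∃ M : ℝ, ∀ z ∈ S, M ≤ ‖z‖ → p z := by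
  simp only [eventually_inf_principal, atInftyC, eventually_comap, eventually_atTop]
  exact ⟨fun ⟨M, hM⟩ => ⟨M, fun z hz hMz => hM _ hMz z rfl hz⟩,
    fun ⟨M, hM⟩ => ⟨M, fun _ hb z hz hzS => hM z hzS (hz ▸ hb)⟩⟩

lemma tendsto_norm_atInftyC_inf_principal (S : Set ℂ) :
    Tendsto (‖·‖) (atInftyC ⊓ 𝓟 S) atTop :=
  tendsto_comap.mono_left inf_le_left

lemma exists_norm_le_of_tendsto_zero {S : Set ℂ} {u : ℂ → ℂ}
    (hu : Tendsto u (atInftyC ⊓ 𝓟 S) (𝓝 0)) {ε : ℝ} (hε : 0 < ε) :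
    ∃ M : ℝ, ∀ z ∈ S, M ≤ ‖z‖ → ‖u z‖ ≤ ε := by
  rw [← eventually_atInftyC_inf_principal]
  exact ((tendsto_zero_iff_norm_tendsto_zero.1 hu).eventually_lt_const hε).mono fun _ => le_of_lt

lemma exists_mem_upperHalf_sdiff_le_norm {S : Set ℂ} (hS : IsBounded S) (M : ℝ) :
    ∃ z ∈ UpperHalf \ S, M ≤ ‖z‖ := by
  obtain ⟨R, hR⟩ := hS.subset_closedBall 0
  set t := |M| + |R| + 1
  have ht : 0 < t := by positivity
  have hnorm : ‖(t : ℂ) * Complex.I‖ = t := by simp [abs_of_pos ht]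
  refine ⟨t * Complex.I, ⟨by simpa [UpperHalf] using ht, fun hz => ?_⟩, ?_⟩
  · have := mem_closedBall_zero_iff.1 (hR hz)
    rw [hnorm] at this
    linarith [le_abs_self R, abs_nonneg M]
  · rw [hnorm]; linarith [le_abs_self M, abs_nonneg R]

lemma atInftyC_inf_principal_upperHalf_sdiff_neBot {S : Set ℂ} (hS : IsBounded S) :
    (atInftyC ⊓ 𝓟 (UpperHalf \ S)).NeBot := by
  refine neBot_iff.2 fun h => ?_
  obtain ⟨M, hM⟩ := eventually_atInftyC_inf_principal.1 (eventually_false_iff_eq_bot.2 h)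
  obtain ⟨z, hz, hMz⟩ := exists_mem_upperHalf_sdiff_le_norm hS M
  exact hM z hz hMz

lemma upperHalf_sdiff_nontrivial {S : Set ℂ} (hS : IsBounded S) : (UpperHalf \ S).Nontrivial := by
  obtain ⟨a, ha, -⟩ := exists_mem_upperHalf_sdiff_le_norm hS 0
  obtain ⟨b, hb, hab⟩ := exists_mem_upperHalf_sdiff_le_norm hS (‖a‖ + 1)
  exact ⟨a, ha, b, hb, fun h => by rw [h] at hab; linarith⟩

lemma isPreconnected_upperHalf_inter_lt_norm {r : ℝ} (hr : 0 < r) :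
    IsPreconnected {w : ℂ | 0 < w.im ∧ r < ‖w‖} := by
  have hstrip : Convex ℝ {z : ℂ | Real.log r < z.re ∧ 0 < z.im ∧ z.im < Real.pi} :=
    (convex_halfSpace_re_gt _).inter ((convex_halfSpace_im_gt 0).inter (convex_halfSpace_im_lt _))
  have himage : Complex.exp '' {z : ℂ | Real.log r < z.re ∧ 0 < z.im ∧ z.im < Real.pi} =
      {w : ℂ | 0 < w.im ∧ r < ‖w‖} := by
    ext w
    constructor
    · rintro ⟨z, ⟨hre, him₀, himπ⟩, rfl⟩
      refine ⟨?_, ?_⟩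
      · rw [Complex.exp_im]
        exact mul_pos (Real.exp_pos _) (Real.sin_pos_of_pos_of_lt_pi him₀ himπ)
      · rw [Complex.norm_exp, ← Real.exp_log hr]
        exact Real.exp_lt_exp.2 hre
    · rintro ⟨him, hnorm⟩
      have hw : w ≠ 0 := fun h => by simp [h] at him
      refine ⟨Complex.log w, ⟨?_, ?_, ?_⟩, Complex.exp_log hw⟩
      · rw [Complex.log_re]; exact Real.log_lt_log hr hnorm
      · rw [Complex.log_im]
        exact (Complex.arg_nonneg_iff.2 him.le).lt_of_ne
          fun h => him.ne' (Complex.arg_eq_zero_iff.1 h.symm).2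
      · rw [Complex.log_im]; exact Complex.arg_lt_pi_iff.2 (Or.inr him.ne')
  rw [← himage]
  exact hstrip.isPreconnected.image _ Complex.continuous_exp.continuousOn

lemma IsHHull.isOpen_upperHalf_sdiff {A : Set ℂ} (hA : IsHHull A) : IsOpen (UpperHalf \ A) := by
  have h : UpperHalf \ A = UpperHalf \ closure A := by
    nth_rw 1 [hA.2.2.1]
    ext z
    simp only [Set.mem_sdiff, mem_inter_iff]
    tauto
  rw [h]
  exact isOpen_upperHalf.sdiff isClosed_closure

lemma IsHHull.isPreconnected_upperHalf_sdiff {A : Set ℂ} (hA : IsHHull A) :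
    IsPreconnected (UpperHalf \ A) :=
  haveI := hA.2.2.2
  isPreconnected_iff_preconnectedSpace.2 inferInstance

section Analytic

variable {E : Type*} [NormedAddCommGroup E] [NormedSpace ℂ E] {U : Set E} {f : E → ℂ}

lemma AnalyticOnNhd.isOpen_image_of_injOn (hf : AnalyticOnNhd ℂ f U) (hU : IsPreconnected U)
    (hU' : U.Nontrivial) (hinj : InjOn f U) {s : Set E} (hsU : s ⊆ U) (hs : IsOpen s) :
    IsOpen (f '' s) := by
  refine (hf.is_constant_or_isOpen hU).resolve_left (fun ⟨w, hw⟩ => ?_) s hsU hs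
  obtain ⟨a, ha, b, hb, hab⟩ := hU'
  exact hab (hinj ha hb ((hw a ha).trans (hw b hb).symm))

lemma AnalyticOnNhd.exists_eqOn_const_of_im_eq_zero (hf : AnalyticOnNhd ℂ f U) (hUo : IsOpen U)
    (hU : IsPreconnected U) (him : ∀ z ∈ U, (f z).im = 0) : ∃ c, ∀ z ∈ U, f z = c := by
  obtain rfl | ⟨z₀, hz₀⟩ := U.eq_empty_or_nonempty
  · exact ⟨0, fun _ h => h.elim⟩
  refine (hf.is_constant_or_isOpen hU).resolve_right fun hopen => ?_
  have hsub : f '' U ⊆ interior {w : ℂ | w.im ≤ 0} :=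
    (hopen U subset_rfl hUo).subset_interior_iff.2 (by rintro _ ⟨z, hz, rfl⟩; exact (him z hz).le)
  rw [Complex.interior_setOfPred_im_le] at hsub
  exact (hsub (mem_image_of_mem f hz₀)).ne (him z₀ hz₀)

lemma Complex.im_le_of_forall_mem_frontier_im_le [Nontrivial E] (hU : IsBounded U)
    (hf : DiffContOnCl ℂ f U) {C : ℝ} (hC : ∀ z ∈ frontier U, (f z).im ≤ C) {z : E}
    (hz : z ∈ closure U) : (f z).im ≤ C := by
  have hnorm : ∀ w, ‖Complex.exp (-Complex.I * f w)‖ = Real.exp (f w).im := fun w => by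
    simp [Complex.norm_exp]
  have hexp : DiffContOnCl ℂ (fun w => Complex.exp (-Complex.I * f w)) U :=
    ⟨(hf.differentiableOn.const_mul _).cexp, (continuousOn_const.mul hf.continuousOn).cexp⟩
  have := Complex.norm_le_of_forall_mem_frontier_norm_le hU hexp
    (fun w hw => (hnorm w).trans_le (Real.exp_le_exp.2 (hC w hw))) hz
  rwa [hnorm, Real.exp_le_exp] at this

end Analytic

lemma Set.InjOn.continuousOn_invFunOn_image {X Y : Type*} [TopologicalSpace X]
    [TopologicalSpace Y] [Nonempty X] {f : X → Y} {U : Set X} (hinj : InjOn f U) (hU : IsOpen U)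
    (hopen : ∀ s ⊆ U, IsOpen s → IsOpen (f '' s)) :
    ContinuousOn (Function.invFunOn f U) (f '' U) := by
  refine continuousOn_iff'.2 fun t ht =>
    ⟨f '' (t ∩ U), hopen _ inter_subset_right (ht.inter hU), ?_⟩
  ext w
  constructor
  · rintro ⟨hwt, z, hz, rfl⟩
    rw [mem_preimage, hinj.leftInvOn_invFunOn hz] at hwt
    exact ⟨⟨z, ⟨hwt, hz⟩, rfl⟩, z, hz, rfl⟩
  · rintro ⟨⟨z, ⟨hzt, hz⟩, rfl⟩, hw⟩
    exact ⟨by rwa [mem_preimage, hinj.leftInvOn_invFunOn hz], hw⟩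

section MapOut

variable {S : Set ℂ} {g g₁ g₂ : ℂ → ℂ}

lemma IsMapOut.mapsTo (hg : IsMapOut S g) : MapsTo g (UpperHalf \ S) UpperHalf :=
  fun _ hz => hg.2.2.1.subset (mem_image_of_mem g hz)

lemma IsMapOut.tendsto_sub (hg₁ : IsMapOut S g₁) (hg₂ : IsMapOut S g₂) :
    Tendsto (fun z => g₁ z - g₂ z) (atInftyC ⊓ 𝓟 (UpperHalf \ S)) (𝓝 0) := by
  simpa using hg₁.2.2.2.sub hg₂.2.2.2

lemma IsMapOut.tendsto_atInftyC (hg : IsMapOut S g) :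
    Tendsto g (atInftyC ⊓ 𝓟 (UpperHalf \ S)) atInftyC := by
  have h := (tendsto_norm_atInftyC_inf_principal (UpperHalf \ S)).atTop_add hg.2.2.2.norm.neg
  refine tendsto_comap_iff.2 (tendsto_atTop_mono (fun z => ?_) h)
  show _ ≤ ‖g z‖
  linarith [norm_le_norm_add_norm_sub' z (g z), norm_sub_rev z (g z)]

lemma IsMapOut.isOpen_image (hS : IsBounded S) (hΩ : IsOpen (UpperHalf \ S))
    (hΩc : IsPreconnected (UpperHalf \ S)) (hg : IsMapOut S g) {s : Set ℂ}
    (hs : s ⊆ UpperHalf \ S) (hso : IsOpen s) : IsOpen (g '' s) :=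
  (hg.1.analyticOnNhd hΩ).isOpen_image_of_injOn hΩc (upperHalf_sdiff_nontrivial hS) hg.2.1 hs hso

lemma IsMapOut.exists_forall_norm_le_add_one (hS : IsBounded S) (hΩ : IsOpen (UpperHalf \ S))
    (hΩc : IsPreconnected (UpperHalf \ S)) (hg : IsMapOut S g) :
    ∃ M₀ : ℝ, ∀ M ≥ M₀, ∀ z ∈ UpperHalf \ S, ‖z‖ ≤ M → ‖g z‖ ≤ M + 1 := by
  obtain ⟨M₁, hM₁⟩ := exists_norm_le_of_tendsto_zero hg.2.2.2 one_pos
  refine ⟨max M₁ 0, fun M hM z hz hzM => ?_⟩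
  have hsphere : ∀ z ∈ UpperHalf \ S, ‖z‖ = M → ‖g z‖ ≤ M + 1 := fun z hz hzM => by
    linarith [norm_le_norm_add_norm_sub' (g z) z, hM₁ z hz (hzM ▸ le_of_max_le_left hM)]
  rcases hzM.eq_or_lt with hzM | hzM
  · exact hsphere z hz hzM
  by_contra! hgz
  obtain ⟨z', hz', hz'M⟩ := exists_mem_upperHalf_sdiff_le_norm hS (max M₁ (M + 3))
  have hgz' : M + 1 < ‖g z'‖ := by
    linarith [norm_le_norm_add_norm_sub' z' (g z'), norm_sub_rev z' (g z'),
      hM₁ z' hz' ((le_max_left _ _).trans hz'M), le_max_right M₁ (M + 3)]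
  -- The images of the inside and the outside of the circle `‖z‖ = M` cover the
  -- connected set `{0 < im, M + 1 < ‖·‖}` and meet it at `g z` and `g z'`.
  have hcover : {w : ℂ | 0 < w.im ∧ M + 1 < ‖w‖} ⊆
      g '' ((UpperHalf \ S) ∩ ball 0 M) ∪ g '' ((UpperHalf \ S) \ closedBall 0 M) := by
    rintro w ⟨hw, hwM⟩
    obtain ⟨v, hv, rfl⟩ := hg.2.2.1.symm.subset (show w ∈ UpperHalf from hw)
    rcases lt_trichotomy ‖v‖ M with hvM | hvM | hvM
    · exact Or.inl ⟨v, ⟨hv, mem_ball_zero_iff.2 hvM⟩, rfl⟩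
    · exact absurd (hsphere v hv hvM) hwM.not_ge
    · exact Or.inr ⟨v, ⟨hv, fun h => (mem_closedBall_zero_iff.1 h).not_gt hvM⟩, rfl⟩
  obtain ⟨w, -, ⟨a, ha, rfl⟩, ⟨b, hb, hba⟩⟩ :=
    isPreconnected_upperHalf_inter_lt_norm (r := M + 1) (by linarith [le_max_right M₁ 0]) _ _
      (hg.isOpen_image hS hΩ hΩc inter_subset_left (hΩ.inter isOpen_ball))
      (hg.isOpen_image hS hΩ hΩc sdiff_subset (hΩ.sdiff isClosed_closedBall)) hcover
      ⟨g z, ⟨hg.mapsTo hz, hgz⟩, z, ⟨hz, mem_ball_zero_iff.2 hzM⟩, rfl⟩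
      ⟨g z', ⟨hg.mapsTo hz', hgz'⟩, z', ⟨hz', fun h => (mem_closedBall_zero_iff.1 h).not_gt
        (by linarith [le_max_right M₁ (M + 3)])⟩, rfl⟩
  rw [hg.2.1 hb.1 ha.1 hba] at hb
  exact hb.2 (ball_subset_closedBall ha.2)

lemma IsMapOut.isBounded_image (hS : IsBounded S) (hΩ : IsOpen (UpperHalf \ S))
    (hΩc : IsPreconnected (UpperHalf \ S)) (hg : IsMapOut S g) {s : Set ℂ} (hs : IsBounded s)
    (hsΩ : s ⊆ UpperHalf \ S) : IsBounded (g '' s) := by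
  obtain ⟨M₀, hM₀⟩ := hg.exists_forall_norm_le_add_one hS hΩ hΩc
  obtain ⟨R, hR⟩ := hs.subset_closedBall 0
  refine (isBounded_closedBall (x := 0) (r := max R M₀ + 1)).subset ?_
  rintro _ ⟨z, hz, rfl⟩
  exact mem_closedBall_zero_iff.2 (hM₀ _ (le_max_right _ _) z (hsΩ hz)
    ((mem_closedBall_zero_iff.1 (hR hz)).trans (le_max_left _ _)))

lemma IsMapOut.closure_inter_preimage_subset (hS : IsBounded S) (hΩ : IsOpen (UpperHalf \ S))
    (hΩc : IsPreconnected (UpperHalf \ S)) (hg : IsMapOut S g) {s F : Set ℂ} (hs : IsBounded s)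
    (hsΩ : s ⊆ UpperHalf \ S) (hF : IsClosed F) (hFU : F ⊆ UpperHalf) :
    closure (s ∩ g ⁻¹' F) ⊆ (UpperHalf \ S) ∩ g ⁻¹' F := by
  obtain ⟨R, hR⟩ := (hg.isBounded_image hS hΩ hΩc hs hsΩ).subset_closedBall 0
  set K := closedBall (0 : ℂ) R ∩ F
  have hKg : K ⊆ g '' (UpperHalf \ S) := fun w hw => hg.2.2.1.symm.subset (hFU hw.2)
  -- `invFunOn g` is continuous on `ℍ`, so it maps `K` onto a compact subset of `ℍ \ S`.
  have hψK : IsCompact (Function.invFunOn g (UpperHalf \ S) '' K) :=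
    ((isCompact_closedBall 0 R).inter_right hF).image_of_continuousOn
      ((hg.2.1.continuousOn_invFunOn_image hΩ fun _ => hg.isOpen_image hS hΩ hΩc).mono hKg)
  refine (closure_minimal ?_ hψK.isClosed).trans ?_
  · rintro z ⟨hzs, hzF⟩
    exact ⟨g z, ⟨hR (mem_image_of_mem g hzs), hzF⟩, hg.2.1.leftInvOn_invFunOn (hsΩ hzs)⟩
  · rintro _ ⟨w, hw, rfl⟩
    refine ⟨Function.invFunOn_mem (hKg hw), ?_⟩
    rw [mem_preimage, Function.invFunOn_eq (hKg hw)]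
    exact hw.2

lemma IsMapOut.im_sub_le (hS : IsBounded S) (hΩ : IsOpen (UpperHalf \ S))
    (hΩc : IsPreconnected (UpperHalf \ S)) (hg₁ : IsMapOut S g₁) (hg₂ : IsMapOut S g₂) {z : ℂ}
    (hz : z ∈ UpperHalf \ S) {ε : ℝ} (hε : 0 < ε) (hεz : ε < (g₁ z).im) :
    (g₁ z - g₂ z).im ≤ ε := by
  obtain ⟨Mε, hMε⟩ := exists_norm_le_of_tendsto_zero (hg₁.tendsto_sub hg₂) hε
  set M := max Mε (‖z‖ + 1)
  set U := ((UpperHalf \ S) ∩ ball 0 M) ∩ g₁ ⁻¹' {w | ε < w.im}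
  have hUo : IsOpen U := (hg₁.1.continuousOn.mono inter_subset_left).isOpen_inter_preimage
    (hΩ.inter isOpen_ball)
    (isOpen_lt continuous_const Complex.continuous_im)
  have hUΩ : closure U ⊆ UpperHalf \ S :=
    (closure_mono (inter_subset_inter_right _
      (preimage_mono (ofPred_subset_ofPred.2 fun _ => le_of_lt)))).trans
      ((hg₁.closure_inter_preimage_subset hS hΩ hΩc (isBounded_ball.subset inter_subset_right)
        inter_subset_left (isClosed_le continuous_const Complex.continuous_im)
        fun w (hw : ε ≤ w.im) => hε.trans_le hw).trans inter_subset_left)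
  have hzU : z ∈ U := ⟨⟨hz, mem_ball_zero_iff.2 (by simp [M])⟩, hεz⟩
  -- Maximum principle on `U`: at a frontier point either `Im g₁ ≤ ε < ε + Im g₂`,
  -- or `‖w‖ = M`, where `g₁ - g₂` is already `ε`-small.
  refine Complex.im_le_of_forall_mem_frontier_im_le
    (isBounded_ball.subset (inter_subset_left.trans inter_subset_right))
    ⟨(hg₁.1.sub hg₂.1).mono (inter_subset_left.trans inter_subset_left),
      (hg₁.1.sub hg₂.1).continuousOn.mono hUΩ⟩ (fun w hw => ?_) (subset_closure hzU)
  rw [hUo.frontier_eq] at hw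
  have hwΩ := hUΩ hw.1
  by_cases hwM : ‖w‖ < M
  · have hw₁ : (g₁ w).im ≤ ε := not_lt.1 fun h => hw.2 ⟨⟨hwΩ, mem_ball_zero_iff.2 hwM⟩, h⟩
    have hw₂ : 0 < (g₂ w).im := hg₂.mapsTo hwΩ
    rw [Pi.sub_apply, Complex.sub_im]
    linarith
  · exact (Complex.im_le_norm _).trans (hMε w hwΩ ((le_max_left _ _).trans (not_lt.1 hwM)))

lemma IsMapOut.im_sub_nonpos (hS : IsBounded S) (hΩ : IsOpen (UpperHalf \ S))
    (hΩc : IsPreconnected (UpperHalf \ S)) (hg₁ : IsMapOut S g₁) (hg₂ : IsMapOut S g₂) {z : ℂ}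
    (hz : z ∈ UpperHalf \ S) : (g₁ z - g₂ z).im ≤ 0 := by
  have him : 0 < (g₁ z).im := hg₁.mapsTo hz
  refine le_of_forall_pos_le_add fun ε hε => ?_
  have := hg₁.im_sub_le hS hΩ hΩc hg₂ hz (lt_min hε (half_pos him))
    ((min_le_right _ _).trans_lt (half_lt_self him))
  linarith [min_le_left ε ((g₁ z).im / 2)]

theorem IsMapOut.eqOn (hS : IsBounded S) (hΩ : IsOpen (UpperHalf \ S))
    (hΩc : IsPreconnected (UpperHalf \ S)) (hg₁ : IsMapOut S g₁) (hg₂ : IsMapOut S g₂) :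
    EqOn g₁ g₂ (UpperHalf \ S) := by
  have him : ∀ z ∈ UpperHalf \ S, (g₁ z - g₂ z).im = 0 := fun z hz => by
    have h₂₁ := hg₂.im_sub_nonpos hS hΩ hΩc hg₁ hz
    rw [← neg_sub, Complex.neg_im] at h₂₁
    linarith [hg₁.im_sub_nonpos hS hΩ hΩc hg₂ hz]
  obtain ⟨c, hc⟩ :=
    ((hg₁.1.sub hg₂.1).analyticOnNhd hΩ).exists_eqOn_const_of_im_eq_zero hΩ hΩc him
  have := atInftyC_inf_principal_upperHalf_sdiff_neBot hS
  have hc0 : c = 0 := tendsto_nhds_unique (tendsto_const_nhds.congr'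
    (eventually_inf_principal.2 (Eventually.of_forall fun z hz => (hc z hz).symm)))
    (hg₁.tendsto_sub hg₂)
  exact fun z hz => sub_eq_zero.1 (hc0 ▸ hc z hz)

lemma HasHcap.tendsto {c : ℝ} (hS : IsBounded S) (hΩ : IsOpen (UpperHalf \ S))
    (hΩc : IsPreconnected (UpperHalf \ S)) (hc : HasHcap S c) (hg : IsMapOut S g) :
    Tendsto (fun z => z * (g z - z)) (atInftyC ⊓ 𝓟 (UpperHalf \ S)) (𝓝 c) := by
  obtain ⟨g', hg', hlim⟩ := hc
  refine hlim.congr' (eventually_inf_principal.2 (Eventually.of_forall fun z hz => ?_))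
  rw [hg'.eqOn hS hΩ hΩc hg hz]

end MapOut

section Composition

variable {A B : Set ℂ} {f h : ℂ → ℂ}

lemma IsMapOut.image_upperHalf_sdiff (hf : IsMapOut A f) (hB : B ⊆ UpperHalf) (hAB : A ⊆ B) :
    f '' (UpperHalf \ B) = UpperHalf \ f '' (B \ A) := by
  have hsplit : UpperHalf \ B = (UpperHalf \ A) \ (B \ A) := by
    ext z
    have := @hAB z
    simp only [Set.mem_sdiff]
    tauto
  rw [hsplit, hf.2.1.image_sdiff_subset fun z hz => ⟨hB hz.1, hz.2⟩, hf.2.2.1]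

lemma IsMapOut.tendsto_upperHalf_sdiff (hf : IsMapOut A f) (hB : B ⊆ UpperHalf) (hAB : A ⊆ B) :
    Tendsto f (atInftyC ⊓ 𝓟 (UpperHalf \ B)) (atInftyC ⊓ 𝓟 (UpperHalf \ f '' (B \ A))) :=
  tendsto_inf.2 ⟨hf.tendsto_atInftyC.mono_left
      (inf_le_inf_left _ (principal_mono.2 (sdiff_subset_sdiff_right hAB))),
    tendsto_principal.2 (mem_inf_of_right (mem_principal.2
      (hf.image_upperHalf_sdiff hB hAB ▸ mapsTo_image f _)))⟩

lemma IsMapOut.comp (hf : IsMapOut A f) (hh : IsMapOut (f '' (B \ A)) h) (hB : B ⊆ UpperHalf)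
    (hAB : A ⊆ B) : IsMapOut B (h ∘ f) := by
  have hΩ : UpperHalf \ B ⊆ UpperHalf \ A := sdiff_subset_sdiff_right hAB
  have himg := hf.image_upperHalf_sdiff hB hAB
  have hmaps : MapsTo f (UpperHalf \ B) (UpperHalf \ f '' (B \ A)) := himg ▸ mapsTo_image f _
  refine ⟨hh.1.comp (hf.1.mono hΩ) hmaps, hh.2.1.comp (hf.2.1.mono hΩ) hmaps,
    by rw [image_comp, himg, hh.2.2.1], ?_⟩
  simpa using (hh.2.2.2.comp (hf.tendsto_upperHalf_sdiff hB hAB)).add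
    (hf.2.2.2.mono_left (inf_le_inf_left _ (principal_mono.2 hΩ)))

end Composition

lemma tendsto_mul_comp_sub_add {l l' : Filter ℂ} {f h : ℂ → ℂ} {a b : ℂ}
    (hf : Tendsto (fun z => f z - z) l (𝓝 0)) (hfl : Tendsto f l l')
    (hh : Tendsto (fun w => h w - w) l' (𝓝 0)) (ha : Tendsto (fun z => z * (f z - z)) l (𝓝 a))
    (hb : Tendsto (fun w => w * (h w - w)) l' (𝓝 b)) :
    Tendsto (fun z => z * (h (f z) - z)) l (𝓝 (a + b)) := by
  have hlim := (ha.add (hb.comp hfl)).sub (hf.mul (hh.comp hfl))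
  rw [zero_mul, sub_zero] at hlim
  refine hlim.congr fun z => ?_
  simp only [Function.comp_apply]
  ring

/-- if `A ⊆ B` are compact `ℍ`-hulls and `g_A` is the mapping-out
function of `A`, then `hcap(B) = hcap(A) + hcap(g_A(B \ A))`. -/
theorem hcap_add (A B : Set ℂ) (hA : IsHHull A) (hB : IsHHull B) (hAB : A ⊆ B)
    (gA : ℂ → ℂ) (hgA : IsMapOut A gA)
    (cA cB cC : ℝ)
    (hcA : HasHcap A cA) (hcB : HasHcap B cB) (hcC : HasHcap (gA '' (B \ A)) cC) :
    cB = cA + cC := by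
  obtain ⟨h, hh, hhlim⟩ := hcC
  have hl : atInftyC ⊓ 𝓟 (UpperHalf \ B) ≤ atInftyC ⊓ 𝓟 (UpperHalf \ A) :=
    inf_le_inf_left _ (principal_mono.2 (sdiff_subset_sdiff_right hAB))
  have hlimA := hcA.tendsto hA.1 hA.isOpen_upperHalf_sdiff hA.isPreconnected_upperHalf_sdiff hgA
  have hlimB := hcB.tendsto hB.1 hB.isOpen_upperHalf_sdiff hB.isPreconnected_upperHalf_sdiff
    (hgA.comp hh hB.2.1 hAB)
  have := atInftyC_inf_principal_upperHalf_sdiff_neBot hB.1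
  have hlim := tendsto_mul_comp_sub_add (hgA.2.2.2.mono_left hl)
    (hgA.tendsto_upperHalf_sdiff hB.2.1 hAB) hh.2.2.2 (hlimA.mono_left hl) hhlim
  exact_mod_cast tendsto_nhds_unique hlimB hlim
end

section
/- Let S be an irreducible Markov chain on a countable planar vertex set V with transition probabilities p(u,v), started at a vertex of a bounded domain D, and let τ_D be the first exit time from D. Then for every self-avoiding path ω, P(L[(S(0),…,S(τ_D))⁻] = ω) = P(L[(S(0),…,S(τ_D))]⁻ = ω), i.e. the law of the loop erasure of the time reversal equals the law of the time reversal of the loop erasure. -/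
open scoped ENNReal

variable {V : Type*}

/-- The weight of a path: the product of the transition probabilities along its steps. -/
noncomputable def pathWeight (p : V → V → ℝ≥0∞) : List V → ℝ≥0∞
  | [] => 1
  | [_] => 1
  | a :: b :: l => p a b * pathWeight p (b :: l)

/-- Chronological loop erasure of a finite path: loops are erased as they are created. -/
def loopErase [DecidableEq V] : List V → List V :=
  go []
where
  go : List V → List V → List V
  | acc, [] => acc.reverse
  | acc, a :: l => if a ∈ acc then go (acc.drop (acc.idxOf a)) l else go (a :: acc) l

/-- `l` is a possible trajectory of the walk started at `x` and stopped on exiting `D`: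
it starts at `x`, all its entries except the last lie in `D`, and the last one is
outside `D`. -/
def IsStoppedPath (D : Set V) (x : V) (l : List V) : Prop :=
  l.head? = some x ∧ (∀ v ∈ l.dropLast, v ∈ D) ∧ ∃ y, l.getLast? = some y ∧ y ∉ D

/-- `p` is a (sub)stochastic transition kernel. -/
def IsStochastic (p : V → V → ℝ≥0∞) : Prop := ∀ u, ∑' v, p u v = 1

/-- Irreducibility of the walk with kernel `p`. -/
def IsIrreducibleKernel (p : V → V → ℝ≥0∞) : Prop :=
  ∀ u v : V, ∃ l : List V, l.head? = some u ∧ l.getLast? = some v ∧ 0 < pathWeight p l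

/-!
Both sides are instances of the loop-erasure formula: the paths in `B` whose loop erasure is a
self-avoiding path `σ` have total weight `w(σ) ∏ⱼ G(σⱼ; B \ {σ₀, …, σⱼ₋₁})`, by cutting a path at
its last visit to `σ₀` and recursing. The right-hand side is this sum for `p` and `σ = ω⁻`. After
reversing the paths, the left-hand side is the same sum for the reversed kernel `p*` with the
Green factors taken in the order of `ω`; reversing loops shows `G_{p*} = G_p`. The order of the
factors is irrelevant because `G(x; B) G(y; B \ {x}) = G(y; B) G(x; B \ {y})`.
-/

section Tsum
variable {α β γ : Type*}

lemma tsum_subtype_eq_tsum_comp {P : γ → Prop} (j : α → γ) (hj : Function.Injective j)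
    (hP : ∀ c, P c ↔ c ∈ Set.range j) (f : γ → ℝ≥0∞) :
    ∑' c : {c // P c}, f c = ∑' a, f (j a) := by
  rw [← tsum_range f hj, ← (Equiv.subtypeEquivRight hP).tsum_eq]
  rfl

lemma tsum_subtype_eq_tsum_mul_tsum {P : γ → Prop} (j : α × β → γ) (hj : Function.Injective j)
    (hP : ∀ c, P c ↔ c ∈ Set.range j) (w : γ → ℝ≥0∞) (f : α → ℝ≥0∞) (g : β → ℝ≥0∞)
    (hw : ∀ a b, w (j (a, b)) = f a * g b) :
    ∑' c : {c // P c}, w c = (∑' a, f a) * ∑' b, g b := by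
  simp_rw [tsum_subtype_eq_tsum_comp j hj hP, ENNReal.tsum_prod', hw, ENNReal.tsum_mul_left,
    ENNReal.tsum_mul_right]

lemma ENNReal.tsum_iSup_of_monotone {ι : Type*} [Preorder ι] [IsDirectedOrder ι]
    {f : ι → α → ℝ≥0∞} (hf : Monotone f) :
    ∑' a, ⨆ i, f i a = ⨆ i, ∑' a, f i a := by
  simp_rw [ENNReal.tsum_eq_iSup_sum]
  rw [iSup_comm]
  exact iSup_congr fun s => ENNReal.finsetSum_iSup_of_monotone fun a _ _ hij => hf hij a

lemma ENNReal.iSup_mul_iSup_of_monotone {ι : Type*} [Preorder ι] [IsDirectedOrder ι]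
    {f g : ι → ℝ≥0∞} (hf : Monotone f) (hg : Monotone g) :
    (⨆ i, f i) * ⨆ i, g i = ⨆ i, f i * g i := by
  refine le_antisymm ?_ (iSup_le fun i => by gcongr <;> exact le_iSup _ i)
  simp_rw [ENNReal.iSup_mul, ENNReal.mul_iSup]
  refine iSup₂_le fun i j => ?_
  obtain ⟨k, hik, hjk⟩ := exists_ge_ge i j
  exact le_iSup_of_le k (mul_le_mul' (hf hik) (hg hjk))

lemma tsum_subtype_and_add_tsum_subtype_and_not (P Q : γ → Prop) (f : γ → ℝ≥0∞) :
    ∑' c : {c // P c ∧ Q c}, f c + ∑' c : {c // P c ∧ ¬ Q c}, f c = ∑' c : {c // P c}, f c := by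
  calc _ = ∑' c, {c | P c ∧ Q c}.indicator f c + ∑' c, {c | P c ∧ ¬ Q c}.indicator f c :=
        congr_arg₂ (· + ·) (tsum_subtype _ f) (tsum_subtype _ f)
    _ = ∑' c, {c | P c}.indicator f c := by
        rw [← ENNReal.tsum_add]
        refine tsum_congr fun c => ?_
        by_cases hP : P c <;> by_cases hQ : Q c <;> simp [Set.indicator, hP, hQ]
    _ = _ := (tsum_subtype _ f).symm

lemma tsum_subtype_congr {P Q : γ → Prop} (h : ∀ c, P c ↔ Q c) (f : γ → ℝ≥0∞) :
    ∑' c : {c // P c}, f c = ∑' c : {c // Q c}, f c :=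
  (Equiv.subtypeEquivRight h).tsum_eq fun c => f c

end Tsum

section PathWeight
variable (p : V → V → ℝ≥0∞)

@[simp] lemma pathWeight_cons_cons (a b : V) (l : List V) :
    pathWeight p (a :: b :: l) = p a b * pathWeight p (b :: l) := rfl

lemma pathWeight_cons_of_head? {a b : V} {l : List V} (h : l.head? = some b) :
    pathWeight p (a :: l) = p a b * pathWeight p l := by
  obtain ⟨t, rfl⟩ := List.head?_eq_some_iff.1 h
  rfl

lemma pathWeight_append_tail {a : V} {l₁ l₂ : List V} (h₁ : l₁.getLast? = some a)
    (h₂ : l₂.head? = some a) :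
    pathWeight p (l₁ ++ l₂.tail) = pathWeight p l₁ * pathWeight p l₂ := by
  induction l₁ with
  | nil => simp at h₁
  | cons b l ih =>
    cases l with
    | nil =>
      obtain rfl : b = a := by simpa using h₁
      obtain ⟨t, rfl⟩ := List.head?_eq_some_iff.1 h₂
      simp [pathWeight]
    | cons c l =>
      rw [List.getLast?_cons_cons] at h₁
      simp only [List.cons_append, pathWeight_cons_cons] at ih ⊢
      rw [ih h₁, mul_assoc]

lemma pathWeight_flip (l : List V) : pathWeight (flip p) l = pathWeight p l.reverse := by
  induction l with
  | nil => rfl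
  | cons a l ih =>
    cases l with
    | nil => rfl
    | cons b t =>
      rw [pathWeight_cons_cons, ih, List.reverse_cons (a := a),
        show (b :: t).reverse ++ [a] = (b :: t).reverse ++ [b, a].tail from rfl,
        pathWeight_append_tail p (by simp) rfl]
      simp [flip, pathWeight, mul_comm]

lemma pathWeight_const_mul (t : ℝ≥0∞) (l : List V) :
    pathWeight (fun u v => t * p u v) l = t ^ (l.length - 1) * pathWeight p l := by
  induction l with
  | nil => simp [pathWeight]
  | cons a l ih =>
    cases l with
    | nil => simp [pathWeight]
    | cons b l =>
      simp only [pathWeight_cons_cons, ih, List.length_cons, Nat.add_sub_cancel, pow_succ]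
      ring

variable {p}

lemma tsum_pathWeight_ofFn_le_one (hp : ∀ u, ∑' v, p u v ≤ 1) (n : ℕ) (x : V) :
    ∑' f : Fin n → V, pathWeight p (x :: List.ofFn f) ≤ 1 := by
  induction n generalizing x with
  | zero => simp [pathWeight]
  | succ n ih =>
    rw [← (Fin.consEquiv fun _ => V).tsum_eq, ENNReal.tsum_prod']
    calc ∑' a, ∑' g : Fin n → V, pathWeight p (x :: List.ofFn (Fin.cons a g : Fin (n + 1) → V))
        = ∑' a, p x a * ∑' g : Fin n → V, pathWeight p (a :: List.ofFn g) := by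
          simp [List.ofFn_succ, ENNReal.tsum_mul_left]
      _ ≤ ∑' a, p x a * 1 := by gcongr with a; exact ih a
      _ ≤ 1 := by simpa using hp x

lemma tsum_pathWeight_const_mul_le (hp : ∀ u, ∑' v, p u v ≤ 1) (t : ℝ≥0∞) (x : V) :
    ∑' m : List V, pathWeight (fun u v => t * p u v) (x :: m) ≤ (1 - t)⁻¹ := by
  rw [← List.equivSigmaTuple.symm.tsum_eq, ENNReal.tsum_sigma', ← ENNReal.tsum_geometric]
  refine ENNReal.tsum_le_tsum fun n => ?_
  simp only [List.equivSigmaTuple_symm_apply, pathWeight_const_mul, List.length_cons,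
    List.length_ofFn, Nat.add_sub_cancel, ENNReal.tsum_mul_left]
  exact mul_le_of_le_one_right' (tsum_pathWeight_ofFn_le_one hp n x)

end PathWeight

section LoopErase
variable [DecidableEq V]

/-- `loopErase.go` without the final reversal: the accumulator is the loop-erased path so far,
most recent vertex first. -/
def loopEraseRev : List V → List V → List V
  | acc, [] => acc
  | acc, a :: l =>
    if a ∈ acc then loopEraseRev (acc.drop (acc.idxOf a)) l else loopEraseRev (a :: acc) l

lemma loopErase_eq_reverse (l : List V) : loopErase l = (loopEraseRev [] l).reverse := by
  suffices ∀ acc, loopErase.go acc l = (loopEraseRev acc l).reverse from this []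
  induction l with
  | nil => intro; rfl
  | cons a l ih => intro acc; rw [loopErase.go, loopEraseRev]; split <;> exact ih _

lemma loopEraseRev_append (acc l₁ l₂ : List V) :
    loopEraseRev acc (l₁ ++ l₂) = loopEraseRev (loopEraseRev acc l₁) l₂ := by
  induction l₁ generalizing acc with
  | nil => rfl
  | cons a l ih => rw [List.cons_append, loopEraseRev, loopEraseRev]; split <;> exact ih _

lemma List.drop_idxOf_ne_nil {acc : List V} {a : V} (h : a ∈ acc) :
    acc.drop (acc.idxOf a) ≠ [] := by
  simpa using List.idxOf_lt_length_iff.2 h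

lemma getLast?_loopEraseRev {acc : List V} (h : acc ≠ []) (l : List V) :
    (loopEraseRev acc l).getLast? = acc.getLast? := by
  induction l generalizing acc with
  | nil => rfl
  | cons a l ih =>
    rw [loopEraseRev]
    split
    · rw [ih (List.drop_idxOf_ne_nil ‹_›), List.getLast?_drop,
        if_neg (by simpa using List.idxOf_lt_length_iff.2 ‹_›)]
    · obtain ⟨b, t, rfl⟩ := List.exists_cons_of_ne_nil h
      rw [ih (List.cons_ne_nil _ _), List.getLast?_cons_cons]

lemma head?_loopEraseRev {l : List V} (h : l ≠ []) (acc : List V) :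
    (loopEraseRev acc l).head? = l.getLast? := by
  obtain ⟨l, a, rfl⟩ := List.eq_nil_or_concat' l |>.resolve_left h
  rw [loopEraseRev_append, List.getLast?_concat]
  generalize loopEraseRev acc l = A
  rw [loopEraseRev, loopEraseRev]
  split
  · rw [List.head?_drop, List.getElem?_eq_getElem (List.idxOf_lt_length_iff.2 ‹_›),
      List.getElem_idxOf]
  · rfl

lemma nodup_loopEraseRev {acc : List V} (h : acc.Nodup) (l : List V) :
    (loopEraseRev acc l).Nodup := by
  induction l generalizing acc with
  | nil => exact h
  | cons a l ih =>
    rw [loopEraseRev]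
    split
    · exact ih (h.sublist (List.drop_sublist _ _))
    · exact ih (List.nodup_cons.2 ⟨‹_›, h⟩)

lemma mem_of_mem_loopEraseRev {acc l : List V} {v : V} (h : v ∈ loopEraseRev acc l) :
    v ∈ acc ∨ v ∈ l := by
  induction l generalizing acc with
  | nil => exact Or.inl h
  | cons a l ih =>
    rw [loopEraseRev] at h
    split at h
    · rcases ih h with h | h
      exacts [Or.inl (List.drop_subset _ _ h), Or.inr (List.mem_cons_of_mem _ h)]
    · rcases ih h with h | h
      · rcases List.mem_cons.1 h with rfl | h
        exacts [Or.inr List.mem_cons_self, Or.inl h]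
      · exact Or.inr (List.mem_cons_of_mem _ h)

lemma loopEraseRev_append_right {acc₀ l : List V} (h : ∀ a ∈ l, a ∉ acc₀) (acc : List V) :
    loopEraseRev (acc ++ acc₀) l = loopEraseRev acc l ++ acc₀ := by
  induction l generalizing acc with
  | nil => rfl
  | cons a l ih =>
    have ha : a ∉ acc₀ := h a List.mem_cons_self
    have ih := ih fun b hb => h b (List.mem_cons_of_mem _ hb)
    rw [loopEraseRev, loopEraseRev]
    by_cases hm : a ∈ acc
    · rw [if_pos (List.mem_append_left _ hm), if_pos hm, List.idxOf_append_of_mem hm,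
        List.drop_append_of_le_length (List.idxOf_lt_length_iff.2 hm).le, ih]
    · rw [if_neg (by simp [hm, ha]), if_neg hm, ← List.cons_append, ih]

lemma loopEraseRev_nil_of_loop {x : V} {lam : List V} (h₁ : lam.head? = some x)
    (h₂ : lam.getLast? = some x) : loopEraseRev [] lam = [x] := by
  obtain ⟨t, rfl⟩ := List.head?_eq_some_iff.1 h₁
  rcases List.eq_nil_or_concat' t with rfl | ⟨t, a, rfl⟩
  · rfl
  rw [← List.cons_append, List.getLast?_concat] at h₂
  obtain rfl : a = x := by simpa using h₂
  have hA : (loopEraseRev [a] t).getLast? = some a := getLast?_loopEraseRev (by simp) t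
  obtain ⟨A, hA⟩ : ∃ A, loopEraseRev [a] t = A ++ [a] :=
    ⟨_, (List.dropLast_append_getLast? _ hA).symm⟩
  have haA : a ∉ A := by
    have := nodup_loopEraseRev (List.nodup_singleton a) t
    rw [hA, List.nodup_append] at this
    exact fun ha => this.2.2 a ha a (List.mem_singleton_self a) rfl
  have hA' : loopEraseRev [] (a :: t) = A ++ [a] := by
    rw [loopEraseRev, if_neg List.not_mem_nil, hA]
  rw [← List.cons_append, loopEraseRev_append, hA', loopEraseRev,
    if_pos (List.mem_append_right _ (List.mem_singleton_self a)),
    List.idxOf_append_of_notMem haA]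
  simp [loopEraseRev]

lemma loopErase_head? (l : List V) : (loopErase l).head? = l.head? := by
  cases l with
  | nil => rfl
  | cons a l =>
    rw [loopErase_eq_reverse, List.head?_reverse, loopEraseRev, if_neg List.not_mem_nil,
      getLast?_loopEraseRev (List.cons_ne_nil _ _)]
    rfl

lemma loopErase_getLast? (l : List V) : (loopErase l).getLast? = l.getLast? := by
  rcases eq_or_ne l [] with rfl | h
  · rfl
  · rw [loopErase_eq_reverse, List.getLast?_reverse, head?_loopEraseRev h]

lemma loopErase_eq_nil_iff {l : List V} : loopErase l = [] ↔ l = [] := by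
  rw [← List.head?_eq_none_iff, loopErase_head?, List.head?_eq_none_iff]

lemma mem_of_mem_loopErase {l : List V} {v : V} (h : v ∈ loopErase l) : v ∈ l := by
  rw [loopErase_eq_reverse, List.mem_reverse] at h
  exact (mem_of_mem_loopEraseRev h).resolve_left List.not_mem_nil

lemma nodup_loopErase (l : List V) : (loopErase l).Nodup := by
  rw [loopErase_eq_reverse, List.nodup_reverse]
  exact nodup_loopEraseRev List.nodup_nil l

lemma loopErase_append_of_loop {x : V} {lam r : List V} (h₁ : lam.head? = some x)
    (h₂ : lam.getLast? = some x) (hx : x ∉ r) :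
    loopErase (lam ++ r) = x :: loopErase r := by
  rw [loopErase_eq_reverse, loopEraseRev_append, loopEraseRev_nil_of_loop h₁ h₂,
    ← List.nil_append [x],
    loopEraseRev_append_right fun a ha hax => hx (by rwa [List.mem_singleton.1 hax] at ha),
    List.reverse_append, loopErase_eq_reverse]
  rfl

lemma loopErase_cons_of_notMem {x : V} {l : List V} (hx : x ∉ l) :
    loopErase (x :: l) = x :: loopErase l :=
  loopErase_append_of_loop (lam := [x]) rfl rfl hx

end LoopErase

section ListLemmas
variable {γ : Type*}

lemma List.append_cons_inj_of_notMem_left {s₁ s₂ t₁ t₂ : List γ} {a : γ} (h₁ : a ∉ s₁)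
    (h₂ : a ∉ s₂) (h : s₁ ++ a :: t₁ = s₂ ++ a :: t₂) : s₁ = s₂ ∧ t₁ = t₂ := by
  induction s₁ generalizing s₂ with
  | nil =>
    cases s₂ with
    | nil => simpa using h
    | cons b s₂ => exact absurd (List.cons.inj h).1 (fun hab => h₂ (hab ▸ List.mem_cons_self))
  | cons b s₁ ih =>
    cases s₂ with
    | nil => exact absurd (List.cons.inj h).1.symm (fun hab => h₁ (hab ▸ List.mem_cons_self))
    | cons c s₂ =>
      rw [List.cons_append, List.cons_append, List.cons.injEq] at h
      obtain ⟨rfl, h⟩ := h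
      simpa using ih (fun hs => h₁ (List.mem_cons_of_mem _ hs))
        (fun hs => h₂ (List.mem_cons_of_mem _ hs)) h

lemma List.append_cons_inj_of_notMem_right {s₁ s₂ t₁ t₂ : List γ} {a : γ} (h₁ : a ∉ t₁)
    (h₂ : a ∉ t₂) (h : s₁ ++ a :: t₁ = s₂ ++ a :: t₂) : s₁ = s₂ ∧ t₁ = t₂ := by
  have h' := congrArg List.reverse h
  simp only [List.reverse_append, List.reverse_cons, List.append_assoc, List.singleton_append]
    at h'
  obtain ⟨ht, hs⟩ := List.append_cons_inj_of_notMem_left (by simpa using h₁) (by simpa using h₂) h'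
  exact ⟨List.reverse_injective hs, List.reverse_injective ht⟩

lemma List.exists_append_cons_notMem_right [DecidableEq γ] {a : γ} {l : List γ} (h : a ∈ l) :
    ∃ s t, l = s ++ a :: t ∧ a ∉ t := by
  obtain ⟨s, t, hs, hl, -⟩ := List.exists_erase_eq (List.mem_reverse.2 h)
  refine ⟨t.reverse, s.reverse, ?_, by simpa using hs⟩
  simpa using congrArg List.reverse hl

lemma List.forall_mem_dropLast_append_cons {P : γ → Prop} {g r : List γ} {z : γ} :
    (∀ v ∈ (g ++ z :: r).dropLast, P v) ↔
      (∀ v ∈ g, P v) ∧ (r ≠ [] → P z) ∧ ∀ v ∈ r.dropLast, P v := by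
  rcases r with _ | ⟨a, r⟩
  · simp
  · simp [or_imp, forall_and]

lemma List.forall_mem_dropLast_sdiff {B : Set γ} {z : γ} {σ : List γ}
    (hB : ∀ v ∈ (z :: σ).dropLast, v ∈ B) (hz : z ∉ σ) : ∀ v ∈ σ.dropLast, v ∈ B \ {z} := by
  intro v hv
  have hσ : σ ≠ [] := by rintro rfl; simp at hv
  refine ⟨hB v ?_, fun hvz => hz (hvz ▸ List.dropLast_subset _ hv)⟩
  rw [List.dropLast_cons_of_ne_nil hσ]
  exact List.mem_cons_of_mem _ hv

end ListLemmas

section Green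
variable (p : V → V → ℝ≥0∞)

def IsPathIn (B : Set V) (x c : V) (l : List V) : Prop :=
  l.head? = some x ∧ l.getLast? = some c ∧ ∀ v ∈ l.dropLast, v ∈ B

noncomputable def pathSum (B : Set V) (x c : V) : ℝ≥0∞ :=
  ∑' l : {l // IsPathIn B x c l}, pathWeight p l

/-- The paper's Green function `G_p(x; B)`. -/
noncomputable def green (B : Set V) (x : V) : ℝ≥0∞ := pathSum p B x x

variable {p}

lemma isPathIn_append_cons_iff {B : Set V} {x y c : V} {s t : List V} :
    IsPathIn B x c (s ++ y :: t) ↔ IsPathIn B x y (s ++ [y]) ∧ IsPathIn B y c (y :: t) := by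
  simp only [IsPathIn, List.dropLast_append_cons, List.mem_append, or_imp, forall_and,
    List.getLast?_append_cons, List.head?_cons, List.head?_append, true_and]
  tauto

lemma isPathIn_diff_singleton_iff {B : Set V} {x y c : V} {l : List V} :
    IsPathIn (B \ {y}) x c l ↔ IsPathIn B x c l ∧ y ∉ l.dropLast := by
  simp only [IsPathIn, Set.mem_sdiff, Set.mem_singleton_iff, forall_and, and_assoc]
  exact and_congr_right' <| and_congr_right' <| and_congr_right' ⟨fun h hy => h y hy rfl,
    fun h v hv hvy => h (hvy ▸ hv)⟩

lemma IsPathIn.eq_cons_tail {B : Set V} {x c : V} {l : List V} (h : IsPathIn B x c l) :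
    l = x :: l.tail := by
  obtain ⟨t, rfl⟩ := List.head?_eq_some_iff.1 h.1
  rfl

/-- Splitting a path at its first visit to `y`. -/
lemma tsum_isPathIn_and_mem (B : Set V) (x y c : V) :
    ∑' l : {l // IsPathIn B x c l ∧ y ∈ l}, pathWeight p l
      = pathSum p (B \ {y}) x y * pathSum p B y c := by
  classical
  have decomp : ∀ {u t : List V}, IsPathIn (B \ {y}) x y u → IsPathIn B y c t →
      ∃ s t', u = s ++ [y] ∧ t = y :: t' ∧ IsPathIn B x y (s ++ [y]) ∧ y ∉ s := by
    intro u t hu ht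
    obtain ⟨s, rfl⟩ : ∃ s, u = s ++ [y] := ⟨_, (List.dropLast_append_getLast? y hu.2.1).symm⟩
    obtain ⟨t', rfl⟩ := List.head?_eq_some_iff.1 ht.1
    simpa using isPathIn_diff_singleton_iff.1 hu
  refine tsum_subtype_eq_tsum_mul_tsum
    (fun ut : {u // IsPathIn (B \ {y}) x y u} × {t // IsPathIn B y c t} => ut.1.1 ++ ut.2.1.tail)
    ?_ (fun l => ?_) _ _ _
    fun u t => pathWeight_append_tail p u.2.2.1 t.2.1
  · rintro ⟨⟨u₁, hu₁⟩, ⟨t₁, ht₁⟩⟩ ⟨⟨u₂, hu₂⟩, ⟨t₂, ht₂⟩⟩ h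
    obtain ⟨s₁, t₁', rfl, rfl, -, hs₁⟩ := decomp hu₁ ht₁
    obtain ⟨s₂, t₂', rfl, rfl, -, hs₂⟩ := decomp hu₂ ht₂
    simp only [List.tail_cons, List.append_assoc, List.singleton_append] at h
    obtain ⟨rfl, rfl⟩ := List.append_cons_inj_of_notMem_left hs₁ hs₂ h
    rfl
  constructor
  · rintro ⟨hl, hy⟩
    obtain ⟨s, t, hs, rfl, -⟩ := List.exists_erase_eq hy
    obtain ⟨hu, ht⟩ := isPathIn_append_cons_iff.1 hl
    exact ⟨(⟨s ++ [y], isPathIn_diff_singleton_iff.2 ⟨hu, by simpa using hs⟩⟩, ⟨y :: t, ht⟩),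
      by simp⟩
  · rintro ⟨⟨⟨u, hu⟩, ⟨t, ht⟩⟩, rfl⟩
    obtain ⟨s, t', rfl, rfl, hu, -⟩ := decomp hu ht
    simp only [List.tail_cons, List.append_assoc, List.singleton_append]
    exact ⟨isPathIn_append_cons_iff.2 ⟨hu, ht⟩, by simp⟩

lemma green_of_notMem {B : Set V} {x : V} (hx : x ∉ B) : green p B x = 1 := by
  have h : ∀ l, IsPathIn B x x l ↔ l ∈ Set.range fun _ : Unit => [x] := by
    intro l
    simp only [Set.mem_range, exists_const]
    constructor
    · rintro ⟨h₁, h₂, h₃⟩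
      obtain ⟨t, rfl⟩ := List.head?_eq_some_iff.1 h₁
      rcases t with _ | ⟨a, t⟩
      · rfl
      · exact absurd (h₃ x (by simp)) hx
    · rintro rfl
      exact ⟨rfl, rfl, by simp⟩
  rw [green, pathSum, tsum_subtype_eq_tsum_comp _ (fun _ _ _ => rfl) h]
  simp [pathWeight]

lemma pathSum_le_tsum (B : Set V) (x c : V) :
    pathSum p B x c ≤ ∑' m : List V, pathWeight p (x :: m) := by
  calc pathSum p B x c = ∑' l : {l // IsPathIn B x c l}, pathWeight p (x :: l.1.tail) :=
        tsum_congr fun l => by rw [← IsPathIn.eq_cons_tail l.2]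
    _ ≤ _ := ENNReal.tsum_comp_le_tsum_of_injective (fun l₁ l₂ h => Subtype.ext <| by
        rw [IsPathIn.eq_cons_tail l₁.2, IsPathIn.eq_cons_tail l₂.2, h])
        fun m => pathWeight p (x :: m)

lemma pathSum_eq_pathSum_diff_mul_green (B : Set V) (x y : V) :
    pathSum p B x y = pathSum p (B \ {y}) x y * green p B y := by
  rw [green, ← tsum_isPathIn_and_mem, pathSum]
  exact tsum_subtype_congr (fun l => ⟨fun h => ⟨h, List.mem_of_getLast? h.2.1⟩, And.left⟩) _

lemma green_eq_green_diff_add {B : Set V} {x y : V} (hxy : x ≠ y) :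
    green p B x = green p (B \ {y}) x + pathSum p (B \ {y}) x y * pathSum p B y x := by
  have hy : ∀ l, IsPathIn B x x l ∧ y ∉ l ↔ IsPathIn (B \ {y}) x x l := fun l => by
    rw [isPathIn_diff_singleton_iff]
    refine and_congr_right fun h => ?_
    conv_lhs => rw [← List.dropLast_append_getLast? x h.2.1]
    simp [Ne.symm hxy]
  rw [green, pathSum, ← tsum_subtype_and_add_tsum_subtype_and_not _ (y ∈ ·), add_comm,
    tsum_isPathIn_and_mem, tsum_subtype_congr hy]
  rfl

/-- With `a = G(x; B)`, `b = G(y; B)`, `E`, `F` the first-passage weights `x → y`, `y → x`: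
first-visit decompositions give `a = G(x; B \ {y}) + E F a` and `b = G(y; B \ {x}) + F E b`, so
`a G(y; B \ {x}) + E F a b = a b = G(x; B \ {y}) b + E F a b`, and `E F a b` can be cancelled. -/
lemma green_mul_green_diff_comm_of_ne_top (hfin : ∀ z, ∑' m : List V, pathWeight p (z :: m) ≠ ⊤)
    (B : Set V) (x y : V) :
    green p B x * green p (B \ {x}) y = green p B y * green p (B \ {y}) x := by
  rcases eq_or_ne x y with rfl | hxy
  · rfl
  have ha := green_eq_green_diff_add (p := p) (B := B) hxy
  have hb := green_eq_green_diff_add (p := p) (B := B) hxy.symm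
  rw [pathSum_eq_pathSum_diff_mul_green B x y] at hb
  rw [pathSum_eq_pathSum_diff_mul_green B y x] at ha
  set a := green p B x
  set b := green p B y
  set E := pathSum p (B \ {y}) x y
  set F := pathSum p (B \ {x}) y x
  have fin : ∀ B x c, pathSum p B x c ≠ ⊤ :=
    fun B x c => ne_top_of_le_ne_top (hfin x) (pathSum_le_tsum B x c)
  have hK : E * F * a * b ≠ ⊤ :=
    ENNReal.mul_ne_top (ENNReal.mul_ne_top (ENNReal.mul_ne_top (fin _ _ _) (fin _ _ _))
      (fin _ _ _)) (fin _ _ _)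
  have key : a * green p (B \ {x}) y + E * F * a * b = green p (B \ {y}) x * b + E * F * a * b :=
    calc _ = a * (green p (B \ {x}) y + F * (E * b)) := by ring
      _ = (green p (B \ {y}) x + E * (F * a)) * b := by rw [← hb, ← ha]
      _ = _ := by ring
  rw [(ENNReal.add_left_inj hK).1 key, mul_comm]

lemma monotone_pathWeight_const_mul (l : List V) :
    Monotone fun t : ℝ≥0∞ => pathWeight (fun u v => t * p u v) l := by
  intro t t' htt'
  simp only [pathWeight_const_mul]
  gcongr

lemma monotone_tsum_pathWeight_const_mul (P : List V → Prop) :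
    Monotone fun t : Set.Iio (1 : ℝ≥0∞) =>
      ∑' l : {l // P l}, pathWeight (fun u v => t * p u v) l :=
  fun _ _ htt' => ENNReal.tsum_le_tsum fun l => monotone_pathWeight_const_mul l.1 htt'

lemma tsum_pathWeight_eq_iSup_const_mul (P : List V → Prop) :
    ∑' l : {l // P l}, pathWeight p l
      = ⨆ t : Set.Iio (1 : ℝ≥0∞), ∑' l : {l // P l}, pathWeight (fun u v => t * p u v) l := by
  refine Eq.trans (tsum_congr fun l => ?_) (ENNReal.tsum_iSup_of_monotone
    (f := fun (t : Set.Iio (1 : ℝ≥0∞)) (l : {l // P l}) => pathWeight (fun u v => t * p u v) l)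
    fun _ _ htt' l => monotone_pathWeight_const_mul l.1 htt')
  have h₁ : ⨆ t : Set.Iio (1 : ℝ≥0∞), (t : ℝ≥0∞) = 1 :=
    (iSup_subtype'' (Set.Iio 1) fun t => t).trans (ENNReal.iSup_lt_eq_self 1)
  have : Nonempty (Set.Iio (1 : ℝ≥0∞)) := ⟨⟨0, Set.mem_Iio.2 zero_lt_one⟩⟩
  simp only [pathWeight_const_mul]
  rw [← ENNReal.iSup_mul, ← ENNReal.iSup_pow, h₁, one_pow, one_mul]

/-- Scaling the kernel by `t < 1` makes all path sums finite; then let `t ↑ 1`. -/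
lemma green_mul_green_diff_comm (hp : ∀ u, ∑' v, p u v ≤ 1) (B : Set V) (x y : V) :
    green p B x * green p (B \ {x}) y = green p B y * green p (B \ {y}) x := by
  simp only [green, pathSum, tsum_pathWeight_eq_iSup_const_mul (p := p)]
  rw [ENNReal.iSup_mul_iSup_of_monotone (monotone_tsum_pathWeight_const_mul _)
      (monotone_tsum_pathWeight_const_mul _),
    ENNReal.iSup_mul_iSup_of_monotone (monotone_tsum_pathWeight_const_mul _)
      (monotone_tsum_pathWeight_const_mul _)]
  refine iSup_congr fun t => green_mul_green_diff_comm_of_ne_top (fun z => ?_) B x y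
  exact ne_top_of_le_ne_top (ENNReal.inv_ne_top.2 (tsub_pos_iff_lt.2 t.2).ne')
    (tsum_pathWeight_const_mul_le hp t z)

lemma IsPathIn.reverse {B : Set V} {x : V} {l : List V} (h : IsPathIn B x x l) :
    IsPathIn B x x l.reverse := by
  refine ⟨by rw [List.head?_reverse, h.2.1], by rw [List.getLast?_reverse, h.1], ?_⟩
  obtain ⟨t, rfl⟩ := List.head?_eq_some_iff.1 h.1
  rcases List.eq_nil_or_concat' t with rfl | ⟨t, a, rfl⟩
  · simp
  obtain ⟨-, hlast, hB⟩ := h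
  rw [← List.cons_append, List.getLast?_concat, Option.some_inj] at hlast
  subst hlast
  rw [← List.cons_append, List.dropLast_concat] at hB
  rw [← List.cons_append, List.reverse_append, List.reverse_singleton, List.singleton_append,
    List.reverse_cons, ← List.cons_append, List.dropLast_concat]
  simpa using hB

lemma green_flip (B : Set V) (x : V) : green (flip p) B x = green p B x := by
  rw [green, pathSum, tsum_subtype_eq_tsum_comp (fun l : {l // IsPathIn B x x l} => l.1.reverse)
    (fun l₁ l₂ h => Subtype.ext (List.reverse_injective h))
    (fun l => ⟨fun h => ⟨⟨_, h.reverse⟩, List.reverse_reverse l⟩,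
      by rintro ⟨l, rfl⟩; exact l.2.reverse⟩)]
  simp only [pathWeight_flip, List.reverse_reverse]
  rfl

end Green

section GreenProd
variable {p : V → V → ℝ≥0∞}

/-- `greenProd p [σ₀, …, σₙ] B = ∏ⱼ G_p(σⱼ; B \ {σ₀, …, σⱼ₋₁})`. -/
noncomputable def greenProd (p : V → V → ℝ≥0∞) : List V → Set V → ℝ≥0∞
  | [], _ => 1
  | x :: l, B => green p B x * greenProd p l (B \ {x})

lemma greenProd_perm (hp : ∀ u, ∑' v, p u v ≤ 1) {l₁ l₂ : List V} (h : l₁.Perm l₂)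
    (B : Set V) : greenProd p l₁ B = greenProd p l₂ B := by
  induction h generalizing B with
  | nil => rfl
  | cons x _ ih => rw [greenProd, greenProd, ih]
  | swap x y l =>
    simp only [greenProd, ← mul_assoc, green_mul_green_diff_comm hp B y x, Set.sdiff_sdiff_comm]
  | trans _ _ ih₁₂ ih₂₃ => rw [ih₁₂, ih₂₃]

lemma greenProd_flip (l : List V) (B : Set V) : greenProd (flip p) l B = greenProd p l B := by
  induction l generalizing B with
  | nil => rfl
  | cons x l ih => rw [greenProd, greenProd, green_flip, ih]

end GreenProd

section ErasureSum
variable [DecidableEq V] (p : V → V → ℝ≥0∞)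

def ErasesTo (B : Set V) (σ l : List V) : Prop :=
  (∀ v ∈ l.dropLast, v ∈ B) ∧ loopErase l = σ

noncomputable def erasureSum (B : Set V) (σ : List V) : ℝ≥0∞ :=
  ∑' l : {l // ErasesTo B σ l}, pathWeight p l

noncomputable def erasureSumFrom (B : Set V) (x : V) (σ : List V) : ℝ≥0∞ :=
  ∑' l : {l // ErasesTo B σ l}, pathWeight p (x :: l)

variable {p}

lemma erasureSumFrom_nil (B : Set V) (x : V) : erasureSumFrom p B x [] = 1 := by
  have h : ∀ l, ErasesTo B [] l ↔ l ∈ Set.range fun _ : Unit => ([] : List V) := fun l => by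
    simp only [ErasesTo, loopErase_eq_nil_iff, Set.mem_range, exists_const, eq_comm (a := []),
      and_iff_right_iff_imp]
    rintro rfl
    simp
  rw [erasureSumFrom, tsum_subtype_eq_tsum_comp _ (fun _ _ _ => rfl) h
    fun l => pathWeight p (x :: l)]
  simp [pathWeight]

lemma erasureSumFrom_cons (B : Set V) (x z : V) (σ : List V) :
    erasureSumFrom p B x (z :: σ) = p x z * erasureSum p B (z :: σ) := by
  rw [erasureSumFrom, erasureSum, ← ENNReal.tsum_mul_left]
  refine tsum_congr fun l => pathWeight_cons_of_head? p ?_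
  rw [← loopErase_head?, l.2.2, List.head?_cons]

lemma ErasesTo.notMem {B : Set V} {z : V} {σ r : List V} (hr : ErasesTo (B \ {z}) σ r)
    (hz : z ∉ σ) : z ∉ r := by
  obtain ⟨hr, rfl⟩ := hr
  intro hzr
  refine (hr z (List.mem_dropLast_of_mem_of_ne_getLast? hzr fun h => hz ?_)).2 rfl
  exact List.mem_of_getLast? (by rw [loopErase_getLast?]; exact h.symm)

/-- Cutting a path at its last visit to the first vertex `z` of its loop erasure. -/
lemma erasesTo_cons_iff {B : Set V} {z : V} {σ l : List V}
    (hB : ∀ v ∈ (z :: σ).dropLast, v ∈ B) (hz : z ∉ σ) :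
    ErasesTo B (z :: σ) l ↔
      ∃ lam r, IsPathIn B z z lam ∧ ErasesTo (B \ {z}) σ r ∧ lam ++ r = l := by
  constructor
  · rintro ⟨hl, hL⟩
    obtain ⟨g, r, rfl, hzr⟩ :=
      List.exists_append_cons_notMem_right (mem_of_mem_loopErase (hL ▸ List.mem_cons_self))
    have hhead : (g ++ [z]).head? = some z := by
      have := loopErase_head? (g ++ z :: r)
      rw [hL] at this
      simpa [List.head?_append] using this.symm
    rw [← List.singleton_append, ← List.append_assoc,
      loopErase_append_of_loop hhead (by simp) hzr, List.cons.injEq] at hL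
    obtain ⟨hg, -, hr⟩ := List.forall_mem_dropLast_append_cons.1 hl
    refine ⟨g ++ [z], r, ⟨hhead, by simp, by simpa using hg⟩,
      ⟨fun v hv => ⟨hr v hv, fun hvz => hzr ?_⟩, hL.2⟩, by simp⟩
    rw [Set.mem_singleton_iff] at hvz
    exact hvz ▸ List.dropLast_subset _ hv
  · rintro ⟨lam, r, hlam, hr, rfl⟩
    obtain ⟨g, rfl⟩ := List.getLast?_eq_some_iff.1 hlam.2.1
    refine ⟨?_, by rw [loopErase_append_of_loop hlam.1 hlam.2.1 (hr.notMem hz), hr.2]⟩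
    rw [List.append_assoc, List.singleton_append, List.forall_mem_dropLast_append_cons]
    refine ⟨by simpa using hlam.2.2, fun hr' => hB z ?_, fun v hv => (hr.1 v hv).1⟩
    have hσ : σ ≠ [] := by rw [← hr.2]; exact mt loopErase_eq_nil_iff.1 hr'
    rw [List.dropLast_cons_of_ne_nil hσ]
    exact List.mem_cons_self

lemma erasureSum_cons {B : Set V} {z : V} {σ : List V} (hB : ∀ v ∈ (z :: σ).dropLast, v ∈ B)
    (hz : z ∉ σ) : erasureSum p B (z :: σ) = green p B z * erasureSumFrom p (B \ {z}) z σ := by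
  refine tsum_subtype_eq_tsum_mul_tsum
    (fun lr : {lam // IsPathIn B z z lam} × {r // ErasesTo (B \ {z}) σ r} => lr.1.1 ++ lr.2.1)
    ?_ (fun l => ?_) _ _ _
    fun lam r => pathWeight_append_tail p (l₂ := z :: r.1) lam.2.2.1 rfl
  · rintro ⟨⟨lam₁, hlam₁⟩, ⟨r₁, hr₁⟩⟩ ⟨⟨lam₂, hlam₂⟩, ⟨r₂, hr₂⟩⟩ h
    obtain ⟨g₁, rfl⟩ := List.getLast?_eq_some_iff.1 hlam₁.2.1
    obtain ⟨g₂, rfl⟩ := List.getLast?_eq_some_iff.1 hlam₂.2.1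
    simp only [List.append_assoc, List.singleton_append] at h
    obtain ⟨rfl, rfl⟩ := List.append_cons_inj_of_notMem_right (hr₁.notMem hz) (hr₂.notMem hz) h
    rfl
  rw [erasesTo_cons_iff hB hz]
  exact ⟨fun ⟨lam, r, hlam, hr, h⟩ => ⟨(⟨lam, hlam⟩, ⟨r, hr⟩), h⟩,
    fun ⟨⟨⟨lam, hlam⟩, ⟨r, hr⟩⟩, h⟩ => ⟨lam, r, hlam, hr, h⟩⟩

end ErasureSum

section ErasureFormula
variable [DecidableEq V] {p : V → V → ℝ≥0∞}

lemma erasureSumFrom_eq {B : Set V} {x : V} {σ : List V} (hσ : σ.Nodup)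
    (hB : ∀ v ∈ σ.dropLast, v ∈ B) :
    erasureSumFrom p B x σ = pathWeight p (x :: σ) * greenProd p σ B := by
  induction σ generalizing x B with
  | nil => simp [erasureSumFrom_nil, pathWeight, greenProd]
  | cons z σ ih =>
    obtain ⟨hz, hσ⟩ := List.nodup_cons.1 hσ
    rw [erasureSumFrom_cons, erasureSum_cons hB hz, ih hσ (List.forall_mem_dropLast_sdiff hB hz),
      pathWeight_cons_cons, greenProd]
    ring

lemma erasureSum_eq {B : Set V} {σ : List V} (hσ : σ.Nodup) (hne : σ ≠ [])
    (hB : ∀ v ∈ σ.dropLast, v ∈ B) : erasureSum p B σ = pathWeight p σ * greenProd p σ B := by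
  obtain ⟨z, σ, rfl⟩ := List.exists_cons_of_ne_nil hne
  obtain ⟨hz, hσ⟩ := List.nodup_cons.1 hσ
  rw [erasureSum_cons hB hz, erasureSumFrom_eq hσ (List.forall_mem_dropLast_sdiff hB hz), greenProd]
  ring

end ErasureFormula

section StoppedPaths
variable {D : Set V} {v0 : V}

def IsEntryPath (D : Set V) (v0 : V) (ω : List V) : Prop :=
  ω.Nodup ∧ ω.getLast? = some v0 ∧ ∃ y ω', ω = y :: ω' ∧ y ∉ D ∧ ∀ v ∈ ω', v ∈ D

lemma IsStoppedPath.isEntryPath {l ω : List V} (hl : IsStoppedPath D v0 l) (hω : ω.Nodup)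
    (hsub : ∀ v ∈ ω, v ∈ l) (hhead : ω.head? = l.getLast?) (hlast : ω.getLast? = l.head?) :
    IsEntryPath D v0 ω := by
  obtain ⟨hh, hdl, y, hy, hyD⟩ := hl
  rw [hy] at hhead
  obtain ⟨ω', rfl⟩ := List.head?_eq_some_iff.1 hhead
  refine ⟨hω, hlast.trans hh, y, ω', rfl, hyD, fun v hv => hdl v ?_⟩
  refine List.mem_dropLast_of_mem_of_ne_getLast? (hsub v (List.mem_cons_of_mem _ hv)) ?_
  rw [hy, Ne, Option.some_inj]
  rintro rfl
  exact (List.nodup_cons.1 hω).1 hv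

variable [DecidableEq V] {p : V → V → ℝ≥0∞}

lemma IsStoppedPath.isEntryPath_loopErase_reverse {l : List V} (hl : IsStoppedPath D v0 l) :
    IsEntryPath D v0 (loopErase l.reverse) :=
  hl.isEntryPath (nodup_loopErase _) (fun _ hv => List.mem_reverse.1 (mem_of_mem_loopErase hv))
    (by rw [loopErase_head?, List.head?_reverse])
    (by rw [loopErase_getLast?, List.getLast?_reverse])

lemma IsStoppedPath.isEntryPath_reverse_loopErase {l : List V} (hl : IsStoppedPath D v0 l) :
    IsEntryPath D v0 (loopErase l).reverse :=
  hl.isEntryPath (List.nodup_reverse.2 (nodup_loopErase _))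
    (fun _ hv => mem_of_mem_loopErase (List.mem_reverse.1 hv))
    (by rw [List.head?_reverse, loopErase_getLast?])
    (by rw [List.getLast?_reverse, loopErase_head?])

lemma tsum_loopErase_reverse_eq {y : V} {ω' : List V} (hω : IsEntryPath D v0 (y :: ω')) :
    ∑' l : {l // IsStoppedPath D v0 l ∧ loopErase l.reverse = y :: ω'}, pathWeight p l
      = pathWeight p (y :: ω').reverse * greenProd p ω' D := by
  obtain ⟨hnd, hlast, _, _, h, hyD, hD⟩ := hω
  obtain ⟨rfl, rfl⟩ := List.cons.inj h
  have hrD : ∀ {r}, ErasesTo D ω' r → ∀ v ∈ r, v ∈ D := by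
    rintro r ⟨hr, rfl⟩ v hv
    by_cases hv' : some v = r.getLast?
    · exact hD v (List.mem_of_getLast? (by rw [loopErase_getLast?, hv']))
    · exact hr v (List.mem_dropLast_of_mem_of_ne_getLast? hv hv')
  rw [← pathWeight_flip, ← greenProd_flip,
    ← erasureSumFrom_eq (List.nodup_cons.1 hnd).2 fun v hv => hD v (List.dropLast_subset _ hv),
    erasureSumFrom, tsum_subtype_eq_tsum_comp (fun r : {r // ErasesTo D ω' r} => (y :: r.1).reverse)
      (fun r₁ r₂ h => Subtype.ext (by simpa using h)) fun l => ?_]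
  · exact tsum_congr fun r => (pathWeight_flip p _).symm
  constructor
  · rintro ⟨⟨-, hdl, -⟩, hL⟩
    obtain ⟨r, hr⟩ := List.head?_eq_some_iff.1
      (show l.reverse.head? = some y by rw [← loopErase_head?, hL, List.head?_cons])
    obtain rfl : l = r.reverse ++ [y] := by rw [← List.reverse_reverse l, hr, List.reverse_cons]
    have hr' : ∀ v ∈ r, v ∈ D := by simpa using hdl
    rw [hr, loopErase_cons_of_notMem fun hyr => hyD (hr' y hyr), List.cons.injEq] at hL
    exact ⟨⟨r, fun v hv => hr' v (List.dropLast_subset _ hv), hL.2⟩, by simp⟩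
  · rintro ⟨⟨r, hr⟩, rfl⟩
    have hL : loopErase (y :: r) = y :: ω' := by
      rw [loopErase_cons_of_notMem fun hyr => hyD (hrD hr y hyr), hr.2]
    refine ⟨⟨?_, ?_, y, by simp, hyD⟩, by rw [List.reverse_reverse, hL]⟩
    · rw [List.head?_reverse, ← loopErase_getLast?, hL, hlast]
    · simpa using hrD hr

lemma tsum_reverse_loopErase_eq {ω : List V} (hω : IsEntryPath D v0 ω) :
    ∑' l : {l // IsStoppedPath D v0 l ∧ (loopErase l).reverse = ω}, pathWeight p l
      = pathWeight p ω.reverse * greenProd p ω.reverse D := by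
  obtain ⟨hnd, hlast, y, ω', rfl, hyD, hD⟩ := hω
  rw [← erasureSum_eq (List.nodup_reverse.2 hnd) (by simp)
    (by simpa [List.dropLast_reverse] using hD), erasureSum]
  refine tsum_subtype_congr (fun l => ⟨fun ⟨hl, hL⟩ => ⟨hl.2.1, by rw [← hL, List.reverse_reverse]⟩,
    fun ⟨hdl, hL⟩ => ⟨⟨?_, hdl, y, ?_, hyD⟩, by rw [hL, List.reverse_reverse]⟩⟩) _
  · rw [← loopErase_head?, hL, List.head?_reverse, hlast]
  · rw [← loopErase_getLast?, hL, List.getLast?_reverse, List.head?_cons]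

end StoppedPaths

theorem lerw_reversal_law_general [DecidableEq V]
    (p : V → V → ℝ≥0∞) (hstoch : IsStochastic p)
    (D : Set V) (v0 : V)
    (ω : List V) :
    (∑' l : {l : List V // IsStoppedPath D v0 l ∧ loopErase l.reverse = ω},
        pathWeight p (l : List V))
      = ∑' l : {l : List V // IsStoppedPath D v0 l ∧ (loopErase l).reverse = ω},
          pathWeight p (l : List V) := by
  by_cases hω : IsEntryPath D v0 ω
  · obtain ⟨-, -, y, ω', rfl, hyD, -⟩ := id hω
    rw [tsum_loopErase_reverse_eq hω, tsum_reverse_loopErase_eq hω,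
      greenProd_perm (fun u => (hstoch u).le) (List.reverse_perm _), greenProd,
      green_of_notMem hyD, Set.sdiff_singleton_eq_self hyD, one_mul]
  · have h₁ : IsEmpty {l // IsStoppedPath D v0 l ∧ loopErase l.reverse = ω} :=
      ⟨fun l => hω (l.2.2 ▸ l.2.1.isEntryPath_loopErase_reverse)⟩
    have h₂ : IsEmpty {l // IsStoppedPath D v0 l ∧ (loopErase l).reverse = ω} :=
      ⟨fun l => hω (l.2.2 ▸ l.2.1.isEntryPath_reverse_loopErase)⟩
    simp only [tsum_empty]

/-- for the (not necessarily reversible) natural random walk started in a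
bounded domain `D` and stopped on exiting `D`, the law of the loop erasure of the
time reversal of the stopped walk equals the law of the time reversal of its loop
erasure: for every self-avoiding path `ω`,
`P(L[(S(0),…,S(τ_D))⁻] = ω) = P(L[(S(0),…,S(τ_D))]⁻ = ω)`. -/
theorem lerw_reversal_law [DecidableEq V] [Countable V]
    (p : V → V → ℝ≥0∞) (hstoch : IsStochastic p) (hirr : IsIrreducibleKernel p)
    (D : Set V) (hD : D.Finite) (v0 : V) (hv0 : v0 ∈ D)
    (ω : List V) (hω : ω.Nodup) :
    (∑' l : {l : List V // IsStoppedPath D v0 l ∧ loopErase l.reverse = ω},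
        pathWeight p (l : List V))
      = ∑' l : {l : List V // IsStoppedPath D v0 l ∧ (loopErase l).reverse = ω},
          pathWeight p (l : List V) :=
  lerw_reversal_law_general p hstoch D v0 ω
end

section
/- Let D ⊊ ℂ be simply connected, a, b distinct prime ends, φ : D → ℍ conformal with φ(a) = 0, φ(b) = ∞, γ a simple curve from a to b with Loewner chain φ_t = g_t ∘ φ and driving function U, and p(t) = φ_t⁻¹(U(t) + i). Given T > 1 and ε > 0, set T̃ = sup{t ∈ [0,T] : |U(t)| < 1/ε}. Then for all t' ≤ t < T̃: |φ(p(t)) − φ(γ(t'))| ≥ (1/2)e^{−4T̃}. -/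
open Set

theorem le_norm_of_le_im {r : ℝ} {z : ℂ} (h : r ≤ z.im) : r ≤ ‖z‖ :=
  h.trans (Complex.im_le_norm z)

theorem norm_two_div_sub_two_div_le {A B : ℂ} (hA : 1 ≤ ‖A‖) (hB : 1 / 2 ≤ ‖B‖) :
    ‖2 / A - 2 / B‖ ≤ 4 * ‖A - B‖ := by
  have hA0 : A ≠ 0 := norm_pos_iff.1 (by linarith)
  have hB0 : B ≠ 0 := norm_pos_iff.1 (by linarith)
  have hAB : 1 / 2 ≤ ‖A‖ * ‖B‖ := by nlinarith
  calc ‖2 / A - 2 / B‖ = 2 * (‖A - B‖ / (‖A‖ * ‖B‖)) := by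
        rw [div_eq_mul_inv, div_eq_mul_inv, ← mul_sub, norm_mul, ← dist_eq_norm,
          dist_inv_inv₀ hA0 hB0, dist_eq_norm]
        norm_num
    _ ≤ 2 * (‖A - B‖ / (1 / 2)) := by gcongr
    _ = 4 * ‖A - B‖ := by ring

theorem ContinuousOn.exists_first_le {k : ℝ → ℝ} {a b c : ℝ} (hk : ContinuousOn k (Icc a b))
    (hab : a ≤ b) (hb : k b ≤ c) : ∃ τ ∈ Icc a b, k τ ≤ c ∧ ∀ s ∈ Ico a τ, c < k s := by
  set S := Icc a b ∩ k ⁻¹' Iic c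
  have hS : IsClosed S := hk.preimage_isClosed_of_isClosed isClosed_Icc isClosed_Iic
  have hbdd : BddBelow S := ⟨a, fun x hx => hx.1.1⟩
  obtain ⟨hτ, hkτ⟩ := hS.csInf_mem ⟨b, right_mem_Icc.2 hab, hb⟩ hbdd
  refine ⟨sInf S, hτ, hkτ, fun s hs => ?_⟩
  by_contra! hle
  exact (csInf_le hbdd ⟨⟨hs.1, hs.2.le.trans hτ.2⟩, hle⟩).not_gt hs.2

namespace Loewner

variable {U : ℝ → ℝ} {a b : ℝ}

theorem im_two_div_sub_ofReal (ζ : ℂ) (u : ℝ) :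
    (2 / (ζ - u)).im = -(2 * ζ.im) / Complex.normSq (ζ - u) := by
  rw [div_eq_mul_inv, Complex.mul_im, Complex.inv_im]
  simp only [Complex.re_ofNat, Complex.im_ofNat, Complex.sub_im, Complex.ofReal_im]
  ring

theorem antitoneOn_sq_im {f : ℝ → ℂ} (hf : ∀ s ∈ Icc a b, HasDerivAt f (2 / (f s - U s)) s) :
    AntitoneOn (fun s => (f s).im ^ 2) (Icc a b) := by
  have hderiv : ∀ s ∈ Icc a b, HasDerivAt (fun s => (f s).im ^ 2)
      (-(4 * (f s).im ^ 2 / Complex.normSq (f s - U s))) s := by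
    intro s hs
    have him : HasDerivAt (fun s => (f s).im) (2 / (f s - U s)).im s :=
      Complex.imCLM.hasFDerivAt.comp_hasDerivAt s (hf s hs)
    refine (him.pow 2).congr_deriv ?_
    rw [im_two_div_sub_ofReal]
    push_cast
    ring
  refine antitoneOn_of_hasDerivWithinAt_nonpos (convex_Icc a b)
    (fun s hs => (hderiv s hs).continuousAt.continuousWithinAt)
    (fun s hs => (hderiv s (interior_subset hs)).hasDerivWithinAt) (fun s _ => ?_)
  exact neg_nonpos.2 (div_nonneg (by positivity) (Complex.normSq_nonneg _))

theorem one_le_im_of_im_eq_one {f : ℝ → ℂ}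
    (hf : ∀ s ∈ Icc a b, HasDerivAt f (2 / (f s - U s)) s) (hb : (f b).im = 1) :
    ∀ s ∈ Icc a b, 1 ≤ (f s).im := by
  have hanti := antitoneOn_sq_im hf
  intro s hs
  have hbI : b ∈ Icc a b := right_mem_Icc.2 (hs.1.trans hs.2)
  have hsq : 1 ≤ (f s).im ^ 2 := by simpa [hb] using hanti hs hbI hs.2
  by_contra! hlt
  -- then `Im f s ≤ -1`, so `Im f` vanishes on `[s, b]`, contradicting `(Im f)² ≥ 1` there
  have hsub : Icc s b ⊆ Icc a b := Icc_subset_Icc_left hs.1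
  have hcont : ContinuousOn (fun s => (f s).im) (Icc s b) := fun x hx =>
    (Complex.continuous_im.continuousAt.comp (hf x (hsub hx)).continuousAt).continuousWithinAt
  obtain ⟨c, hc, hc0⟩ : (0 : ℝ) ∈ (fun s => (f s).im) '' Icc s b :=
    intermediate_value_Icc hs.2 hcont ⟨by nlinarith, by rw [hb]; norm_num⟩
  have := hanti (hsub hc) hbI hc.2
  simp only [hc0, hb] at this
  norm_num at this

theorem norm_sub_le_mul_exp {f₁ f₂ : ℝ → ℂ} (hab : a ≤ b)
    (hf₁ : ContinuousOn f₁ (Icc a b)) (hf₁' : ∀ s ∈ Ico a b, HasDerivAt f₁ (2 / (f₁ s - U s)) s)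
    (hf₂ : ContinuousOn f₂ (Icc a b)) (hf₂' : ∀ s ∈ Ico a b, HasDerivAt f₂ (2 / (f₂ s - U s)) s)
    (him₁ : ∀ s ∈ Ico a b, 1 ≤ (f₁ s).im) (him₂ : ∀ s ∈ Ico a b, 1 / 2 ≤ (f₂ s).im) :
    ‖f₁ b - f₂ b‖ ≤ ‖f₁ a - f₂ a‖ * Real.exp (4 * (b - a)) := by
  have hbound : ∀ s ∈ Ico a b,
      ‖2 / (f₁ s - U s) - 2 / (f₂ s - U s)‖ ≤ 4 * ‖f₁ s - f₂ s‖ + 0 := by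
    intro s hs
    rw [add_zero, ← sub_sub_sub_cancel_right (f₁ s) (f₂ s) (U s : ℂ)]
    exact norm_two_div_sub_two_div_le (le_norm_of_le_im (by simpa using him₁ s hs))
      (le_norm_of_le_im (by simpa using him₂ s hs))
  simpa [gronwallBound_ε0] using norm_le_gronwallBound_of_norm_deriv_right_le (hf₁.sub hf₂)
    (fun s hs => ((hf₁' s hs).sub (hf₂' s hs)).hasDerivWithinAt) le_rfl hbound b
    (right_mem_Icc.2 hab)

end Loewner

theorem reference_point_far_from_curve_general
    (φ : ℂ → ℂ)
    (γ pp : ℝ → ℂ) (g : ℝ → ℂ → ℂ) (U : ℝ → ℝ)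
    (hg0 : ∀ ζ : ℂ, g 0 ζ = ζ)
    (Ttil : ℝ)
    (t t' : ℝ) (ht' : 0 ≤ t') (ht't : t' ≤ t) (htT : t < Ttil)
    -- the Loewner evolution of `w = φ(p(t))`, with `φ_t(p(t)) = U(t) + i`
    (hwode : ∀ s ∈ Set.Icc (0:ℝ) t,
      HasDerivAt (fun τ => g τ (φ (pp t))) (2 / (g s (φ (pp t)) - U s)) s)
    (hwt : g t (φ (pp t)) = (U t : ℂ) + Complex.I)
    -- the Loewner evolution of `z = φ(γ(t'))`, swallowed at time `t'`
    (hzode : ∀ s ∈ Set.Ico (0:ℝ) t',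
      HasDerivAt (fun τ => g τ (φ (γ t'))) (2 / (g s (φ (γ t')) - U s)) s)
    (hzcont : ContinuousOn (fun τ => g τ (φ (γ t'))) (Set.Icc 0 t'))
    (hzt : g t' (φ (γ t')) = (U t' : ℂ)) :
    2⁻¹ * Real.exp (-(4 * Ttil)) ≤ ‖φ (pp t) - φ (γ t')‖ := by
  set w := φ (pp t)
  set z := φ (γ t')
  have hw_im : ∀ s ∈ Icc 0 t, 1 ≤ (g s w).im :=
    Loewner.one_le_im_of_im_eq_one hwode (by simp [hwt])
  obtain ⟨τ, ⟨hτ0, hτt'⟩, hzτ, hz_im⟩ :=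
    (Complex.continuous_im.comp_continuousOn hzcont).exists_first_le ht' (c := 1 / 2)
      (by simp [hzt])
  have hτt : τ ≤ t := hτt'.trans ht't
  have hgron : ‖g τ w - g τ z‖ ≤ ‖w - z‖ * Real.exp (4 * τ) := by
    simpa [hg0] using Loewner.norm_sub_le_mul_exp hτ0
      (fun s hs => (hwode s ⟨hs.1, hs.2.trans hτt⟩).continuousAt.continuousWithinAt)
      (fun s hs => hwode s ⟨hs.1, hs.2.le.trans hτt⟩) (hzcont.mono (Icc_subset_Icc_right hτt'))
      (fun s hs => hzode s ⟨hs.1, hs.2.trans_le hτt'⟩)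
      (fun s hs => hw_im s ⟨hs.1, hs.2.le.trans hτt⟩) (fun s hs => (hz_im s hs).le)
  have hyτ : 1 / 2 ≤ ‖g τ w - g τ z‖ := le_norm_of_le_im <| by
    simp only [Complex.sub_im, Function.comp_apply] at hzτ ⊢
    linarith [hw_im τ ⟨hτ0, hτt⟩]
  calc 2⁻¹ * Real.exp (-(4 * Ttil)) ≤ ‖w - z‖ * Real.exp (4 * τ) * Real.exp (-(4 * Ttil)) := by
        gcongr; linarith
    _ ≤ ‖w - z‖ * Real.exp (4 * Ttil) * Real.exp (-(4 * Ttil)) := by gcongr; linarith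
    _ = ‖w - z‖ := by rw [mul_assoc, ← Real.exp_add, add_neg_cancel, Real.exp_zero, mul_one]

/-- let `D ⊊ ℂ` be simply connected with prime ends `a ≠ b`,
`φ : D → ℍ` conformal with `φ(a) = 0`, `φ(b) = ∞`, `γ` a simple curve from `a` to `b`
with Loewner chain `g_t` (so `φ_t = g_t ∘ φ`), driving function `U`, and reference
point `p(t) = φ_t⁻¹(U(t) + i)`.  Given `T > 1`, `ε > 0` and
`T̃ = sup{t ∈ [0,T] : |U(t)| < 1/ε}`, for all `t' ≤ t < T̃`:
`|φ(p(t)) − φ(γ(t'))| ≥ (1/2) e^{−4T̃}`. -/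
theorem reference_point_far_from_curve
    (D : Set ℂ) (hD : IsOpen D ∧ D.Nonempty ∧ D ≠ Set.univ ∧ SimplyConnectedSpace ↥D)
    (φ : ℂ → ℂ) (hφ : DifferentiableOn ℂ φ D ∧ Set.InjOn φ D ∧ φ '' D = UpperHalf)
    (γ pp : ℝ → ℂ) (g : ℝ → ℂ → ℂ) (U : ℝ → ℝ) (hU : Continuous U)
    (hg0 : ∀ ζ : ℂ, g 0 ζ = ζ)
    (T ε Ttil : ℝ) (hT : 1 < T) (hε : 0 < ε)
    (hTtil : Ttil = sSup {s : ℝ | s ∈ Set.Icc 0 T ∧ |U s| < 1 / ε})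
    (t t' : ℝ) (ht' : 0 ≤ t') (ht't : t' ≤ t) (htT : t < Ttil)
    (hzim : 0 < (φ (γ t')).im)
    -- the Loewner evolution of `w = φ(p(t))`, with `φ_t(p(t)) = U(t) + i`
    (hwode : ∀ s ∈ Set.Icc (0:ℝ) t,
      HasDerivAt (fun τ => g τ (φ (pp t))) (2 / (g s (φ (pp t)) - U s)) s)
    (hwt : g t (φ (pp t)) = (U t : ℂ) + Complex.I)
    -- the Loewner evolution of `z = φ(γ(t'))`, swallowed at time `t'`
    (hzode : ∀ s ∈ Set.Ico (0:ℝ) t',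
      HasDerivAt (fun τ => g τ (φ (γ t'))) (2 / (g s (φ (γ t')) - U s)) s)
    (hzcont : ContinuousOn (fun τ => g τ (φ (γ t'))) (Set.Icc 0 t'))
    (hzt : g t' (φ (γ t')) = (U t' : ℂ)) :
    2⁻¹ * Real.exp (-(4 * Ttil)) ≤ ‖φ (pp t) - φ (γ t')‖ :=
  reference_point_far_from_curve_general φ γ pp g U hg0 Ttil t t' ht' ht't htT hwode hwt hzode
    hzcont hzt
end
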